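/- arXiv:0902.0041 — 5 statements merged into one kernel-verified Lean document; each statement's English description precedes it below -/
import Mathlib

section
/- Let K : ℝ → ℝ be differentiable with K(x) ≠ 0 for x in an open interval (α, β), K continuous on [α, β] with K(α) = K(β) = 0. Let P be a polynomial with n simple zeros γ₁ < … < γ_n, all in (α, β), and let Q(x) = (A(x)/K(x))·(d/dx)[K(x)P(x)] where A is a polynomial with A/K nonvanishing on (α, β) and Q is a polynomial of degree n+1. Then Q has n+1 real zeros δ₁ < … < δ_{n+1} in (α, β) satisfying the interlacing property α < δ₁ < γ₁ < δ₂ < γ₂ < … < δ_n < γ_n < δ_{n+1} < β. -/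
/-!
On each of the `n + 1` intervals cut out of `[α, β]` by the zeros `γ₁ < ⋯ < γₙ` of `P`, the function
`K · P` vanishes at both ends, so by Rolle's theorem its derivative vanishes at some interior point
`δᵢ`. Since `Q = (A / K) · (K P)'` on `(α, β)`, each `δᵢ` is a zero of `Q`, and the `δᵢ` interlace
with the `γᵢ` because they lie in consecutive intervals.
-/

open Polynomial Set

namespace Fin

variable {α : Type*} {m : ℕ}

lemma strictMono_snoc [Preorder α] {f : Fin m → α} {a : α} :
    StrictMono (snoc f a : Fin (m + 1) → α) ↔ StrictMono f ∧ ∀ i, f i < a := by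
  rw [← insertNth_last', strictMono_insertNth_iff]
  simp [castSucc_lt_last, (castSucc_lt_last _).not_ge]

lemma strictMono_of_mem_Ioo_castSucc_succ [Preorder α] {e : Fin (m + 1) → α} {δ : Fin m → α}
    (hδ : ∀ j, δ j ∈ Ioo (e j.castSucc) (e j.succ)) : StrictMono δ := by
  obtain _ | m := m
  · exact fun i => i.elim0
  refine strictMono_iff_lt_succ.mpr fun j => ?_
  calc δ j.castSucc < e j.castSucc.succ := (hδ _).2
    _ = e j.succ.castSucc := by rw [succ_castSucc]
    _ < δ j.succ := (hδ _).1

def consSnoc (a : α) (γ : Fin m → α) (b : α) : Fin (m + 2) → α :=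
  cons a (snoc γ b)

variable {a b : α} {γ : Fin m → α}

@[simp] lemma consSnoc_zero : consSnoc a γ b 0 = a := rfl

@[simp] lemma consSnoc_last : consSnoc a γ b (last (m + 1)) = b := by
  simp [consSnoc, ← succ_last]

@[simp] lemma consSnoc_succ_castSucc (i : Fin m) : consSnoc a γ b i.castSucc.succ = γ i := by
  simp [consSnoc]

lemma forall_consSnoc_iff {p : α → Prop} :
    (∀ i, p (consSnoc a γ b i)) ↔ p a ∧ (∀ i, p (γ i)) ∧ p b := by
  rw [forall_fin_succ, forall_fin_succ']
  simp [consSnoc]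

lemma strictMono_consSnoc [Preorder α] (hab : a < b) (hγ : StrictMono γ)
    (hγmem : ∀ i, γ i ∈ Ioo a b) : StrictMono (consSnoc a γ b) := by
  refine strictMono_cons.mpr ⟨fun j => ?_, strictMono_snoc.mpr ⟨hγ, fun i => (hγmem i).2⟩⟩
  induction j using lastCases with
  | last => simpa using hab
  | cast i => simpa using (hγmem i).1

end Fin

theorem exists_deriv_eq_zero_between_zeros {m : ℕ} {f : ℝ → ℝ} {e : Fin (m + 1) → ℝ}
    (he : StrictMono e) (hf : ContinuousOn f (Icc (e 0) (e (Fin.last m))))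
    (hfe : ∀ i, f (e i) = 0) :
    ∃ δ : Fin m → ℝ, StrictMono δ ∧ (∀ j, δ j ∈ Ioo (e j.castSucc) (e j.succ)) ∧
      ∀ j, deriv f (δ j) = 0 := by
  have hRolle : ∀ j : Fin m, ∃ c ∈ Ioo (e j.castSucc) (e j.succ), deriv f c = 0 := fun j =>
    exists_deriv_eq_zero (he Fin.castSucc_lt_succ)
      (hf.mono (Icc_subset_Icc (he.monotone (Fin.zero_le _)) (he.monotone (Fin.le_last _))))
      (by rw [hfe, hfe])
  choose δ hδmem hδcrit using hRolle
  exact ⟨δ, Fin.strictMono_of_mem_Ioo_castSucc_succ hδmem, hδmem, hδcrit⟩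

theorem stmt_8_general (n : ℕ) (α β : ℝ) (hab : α < β)
    (K : ℝ → ℝ)
    (hKcont : ContinuousOn K (Icc α β))
    (hKα : K α = 0) (hKβ : K β = 0)
    (P A Q : Polynomial ℝ)
    (γ : Fin n → ℝ) (hγmono : StrictMono γ)
    (hγmem : ∀ i, γ i ∈ Ioo α β)
    (hγroot : ∀ i, P.eval (γ i) = 0)
    (hQ : ∀ x ∈ Ioo α β,
      Q.eval x = (A.eval x / K x) * deriv (fun y => K y * P.eval y) x) :
    ∃ δ : Fin (n + 1) → ℝ, StrictMono δ ∧
      (∀ i, Q.eval (δ i) = 0) ∧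
      (∀ i, δ i ∈ Ioo α β) ∧
      α < δ 0 ∧ δ (Fin.last n) < β ∧
      (∀ i : Fin n, δ i.castSucc < γ i ∧ γ i < δ i.succ) := by
  set e := Fin.consSnoc α γ β
  have he : StrictMono e := Fin.strictMono_consSnoc hab hγmono hγmem
  have hKP : ∀ i, K (e i) * P.eval (e i) = 0 :=
    Fin.forall_consSnoc_iff (p := fun x => K x * P.eval x = 0) |>.mpr
      ⟨by rw [hKα, zero_mul], fun i => by rw [hγroot, mul_zero], by rw [hKβ, zero_mul]⟩
  obtain ⟨δ, hδmono, hδmem, hδcrit⟩ := exists_deriv_eq_zero_between_zeros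
    (f := fun y => K y * P.eval y) he
    (by simpa only [e, Fin.consSnoc_zero, Fin.consSnoc_last] using
      hKcont.fun_mul P.continuous.continuousOn) hKP
  have hδIoo : ∀ j, δ j ∈ Ioo α β := fun j =>
    ⟨(he.monotone (Fin.zero_le _)).trans_lt (hδmem j).1,
      (hδmem j).2.trans_le (by simpa [e] using he.monotone (Fin.le_last j.succ))⟩
  refine ⟨δ, hδmono, fun j => ?_, hδIoo, (hδIoo 0).1, (hδIoo _).2, fun i => ⟨?_, ?_⟩⟩
  · rw [hQ _ (hδIoo j), hδcrit j, mul_zero]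
  · simpa [e] using (hδmem i.castSucc).2
  · simpa [e, ← Fin.succ_castSucc] using (hδmem i.succ).1

theorem stmt_8 (n : ℕ) (α β : ℝ) (hab : α < β)
    (K : ℝ → ℝ)
    (hKcont : ContinuousOn K (Icc α β))
    (hKdiff : ∀ x ∈ Ioo α β, DifferentiableAt ℝ K x)
    (hKne : ∀ x ∈ Ioo α β, K x ≠ 0)
    (hKα : K α = 0) (hKβ : K β = 0)
    (P A Q : Polynomial ℝ)
    (hPdeg : P.degree = n)
    (γ : Fin n → ℝ) (hγmono : StrictMono γ)
    (hγmem : ∀ i, γ i ∈ Ioo α β)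
    (hγroot : ∀ i, P.eval (γ i) = 0)
    (hγsimple : ∀ i, (derivative P).eval (γ i) ≠ 0)
    (hAK : ∀ x ∈ Ioo α β, A.eval x / K x ≠ 0)
    (hQdeg : Q.degree = n + 1)
    (hQ : ∀ x ∈ Ioo α β,
      Q.eval x = (A.eval x / K x) * deriv (fun y => K y * P.eval y) x) :
    ∃ δ : Fin (n + 1) → ℝ, StrictMono δ ∧
      (∀ i, Q.eval (δ i) = 0) ∧
      (∀ i, δ i ∈ Ioo α β) ∧
      α < δ 0 ∧ δ (Fin.last n) < β ∧
      (∀ i : Fin n, δ i.castSucc < γ i ∧ γ i < δ i.succ) :=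
  stmt_8_general n α β hab K hKcont hKα hKβ P A Q γ hγmono hγmem hγroot hQ
end

section
/- For every n ≥ 1, all zeros of the Bell polynomial 𝔅_n(x) = Σ_{k=0}^n S(n,k) x^k are real, simple, and lie in the interval (−∞, 0]. -/
/-!
Write `p = 𝔅ₙ`, so that `𝔅ₙ₊₁ = X (p + p')` and `(eˣ p)' = eˣ (p + p')`. Inductively `p` has `n`
simple roots `γ₀ < ⋯ < γₙ₋₁ ≤ 0`. Rolle's theorem for `eˣ p` puts a root of `p + p'` strictly
between any two consecutive `γᵢ`, and one more lies to the left of `γ₀`, because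
`(p + p')(γ₀) = p'(γ₀)` has the sign opposite to that of `p + p'` near `-∞`. These are all `n`
roots of `p + p'`, all negative, and the factor `X` adds the root `0`.
-/

open Polynomial

/-- Stirling numbers of the second kind. -/
def stirling2 : ℕ → ℕ → ℕ
  | 0, 0 => 1
  | 0, _ + 1 => 0
  | _ + 1, 0 => 0
  | n + 1, k + 1 => (k + 1) * stirling2 n (k + 1) + stirling2 n k

/-- The Bell polynomials. -/
noncomputable def bellPoly (n : ℕ) : Polynomial ℝ :=
  ∑ k ∈ Finset.range (n + 1), Polynomial.C (stirling2 n k : ℝ) * Polynomial.X ^ k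

open Set Filter

theorem stirling2_eq_zero_of_lt {n k : ℕ} (h : n < k) : stirling2 n k = 0 := by
  induction n generalizing k with
  | zero => obtain ⟨k, rfl⟩ := Nat.exists_eq_add_one_of_ne_zero (by omega : k ≠ 0); rfl
  | succ n ih =>
    obtain ⟨k, rfl⟩ := Nat.exists_eq_add_one_of_ne_zero (by omega : k ≠ 0)
    simp [stirling2, ih (by omega : n < k + 1), ih (by omega : n < k)]

theorem coeff_bellPoly (n k : ℕ) : (bellPoly n).coeff k = stirling2 n k := by
  simp only [bellPoly, finsetSum_coeff, coeff_C_mul_X_pow, Finset.sum_ite_eq, Finset.mem_range]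
  split_ifs with h
  · rfl
  · rw [stirling2_eq_zero_of_lt (by omega), Nat.cast_zero]

theorem bellPoly_zero : bellPoly 0 = 1 := by
  simp [bellPoly, stirling2]

theorem bellPoly_succ (n : ℕ) :
    bellPoly (n + 1) = X * (bellPoly n + derivative (bellPoly n)) := by
  ext k
  cases k with
  | zero => simp [coeff_bellPoly, stirling2]
  | succ k =>
    simp only [coeff_X_mul, coeff_add, coeff_derivative, coeff_bellPoly, stirling2]
    push_cast
    ring

namespace Polynomial

theorem natDegree_add_derivative {R : Type*} [Semiring R] (p : R[X]) :
    (p + derivative p).natDegree = p.natDegree := by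
  rcases eq_or_ne p 0 with rfl | hp
  · simp
  · exact natDegree_eq_of_degree_eq (degree_add_eq_left_of_degree_lt (degree_derivative_lt hp))

theorem Monic.add_derivative {R : Type*} [Semiring R] [Nontrivial R] {p : R[X]} (hp : p.Monic) :
    (p + derivative p).Monic :=
  hp.add_of_left (degree_derivative_lt hp.ne_zero)

theorem Monic.eq_prod_X_sub_C_of_isRoot {K ι : Type*} [Field K] [Fintype ι] {p : K[X]}
    (hp : p.Monic) (δ : ι → K) (hδ : Function.Injective δ) (hroot : ∀ i, p.IsRoot (δ i))
    (hdeg : p.natDegree ≤ Fintype.card ι) : p = ∏ i, (X - C (δ i)) := by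
  refine eq_of_monic_of_dvd_of_natDegree_le (monic_prod_X_sub_C _ _) hp ?_ (by simpa using hdeg)
  exact Fintype.prod_dvd_of_coprime (pairwise_coprime_X_sub_C hδ) fun i ↦ dvd_iff_isRoot.2 (hroot i)

theorem isRoot_prod_X_sub_C {R ι : Type*} [CommRing R] [Fintype ι] (γ : ι → R) (i : ι) :
    (∏ j, (X - C (γ j))).IsRoot (γ i) :=
  dvd_iff_isRoot.1 (Finset.dvd_prod_of_mem _ (Finset.mem_univ i))

theorem tendsto_neg_one_pow_mul_eval_atBot {p : ℝ[X]} (hp : p.Monic) (hdeg : p.natDegree ≠ 0) :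
    Tendsto (fun x ↦ (-1) ^ p.natDegree * p.eval x) atBot atTop := by
  have hequiv := (Asymptotics.IsEquivalent.refl (u := fun _ : ℝ ↦ (-1 : ℝ) ^ p.natDegree)
    (l := atBot)).mul p.isEquivalent_atBot_lead
  refine hequiv.symm.tendsto_atTop ?_
  refine ((tendsto_pow_atTop hdeg).comp tendsto_neg_atBot_atTop).congr fun x ↦ ?_
  simp only [Function.comp_apply, Pi.mul_apply, hp.leadingCoeff, one_mul, ← mul_pow, neg_one_mul]

end Polynomial

theorem hasDerivAt_exp_mul_eval (p : ℝ[X]) (x : ℝ) :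
    HasDerivAt (fun x ↦ Real.exp x * p.eval x) (Real.exp x * (p + derivative p).eval x) x :=
  ((Real.hasDerivAt_exp x).mul (p.hasDerivAt x)).congr_deriv (by rw [eval_add]; ring)

theorem exists_isRoot_add_derivative_mem_Ioo {p : ℝ[X]} {a b : ℝ} (hab : a < b)
    (ha : p.IsRoot a) (hb : p.IsRoot b) : ∃ c ∈ Ioo a b, (p + derivative p).IsRoot c := by
  have hfab : Real.exp a * p.eval a = Real.exp b * p.eval b := by
    rw [ha.eq_zero, hb.eq_zero, mul_zero, mul_zero]
  obtain ⟨c, hc, hc0⟩ := exists_hasDerivAt_eq_zero hab (by fun_prop) hfab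
    fun x _ ↦ hasDerivAt_exp_mul_eval p x
  exact ⟨c, hc, (mul_eq_zero.1 hc0).resolve_left (Real.exp_ne_zero c)⟩

section SmallestRoot

variable {m : ℕ} (γ : Fin (m + 1) → ℝ)

theorem neg_one_pow_mul_eval_add_derivative_neg (hγ : StrictMono γ) :
    (-1) ^ (m + 1) * (∏ i, (X - C (γ i)) + derivative (∏ i, (X - C (γ i)))).eval (γ 0) < 0 := by
  set q : ℝ[X] := ∏ i : Fin m, (X - C (γ i.succ))
  have hval :
      (∏ i, (X - C (γ i)) + derivative (∏ i, (X - C (γ i)))).eval (γ 0) = q.eval (γ 0) := by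
    simp [Fin.prod_univ_succ, q, derivative_mul]
  have hq : q.eval (γ 0) = (-1) ^ m * ∏ i : Fin m, (γ i.succ - γ 0) := by
    simp only [q, eval_prod, eval_sub, eval_X, eval_C, ← neg_sub (γ _) (γ 0), Finset.prod_neg,
      Finset.card_univ, Fintype.card_fin]
  have hpos : 0 < ∏ i : Fin m, (γ i.succ - γ 0) :=
    Finset.prod_pos fun i _ ↦ sub_pos.2 (hγ i.succ_pos)
  have hsign : (-1 : ℝ) ^ (m + 1) * (-1) ^ m = -1 := by
    rw [← pow_add, Odd.neg_one_pow ⟨m, by ring⟩]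
  rw [hval, hq, ← mul_assoc, hsign]
  linarith

theorem exists_isRoot_add_derivative_lt (hγ : StrictMono γ) :
    ∃ c < γ 0, (∏ i, (X - C (γ i)) + derivative (∏ i, (X - C (γ i)))).IsRoot c := by
  set g := ∏ i, (X - C (γ i)) + derivative (∏ i, (X - C (γ i)))
  have hdeg : g.natDegree = m + 1 := by simp [g, natDegree_add_derivative]
  have hlim : Tendsto (fun x ↦ (-1) ^ (m + 1) * g.eval x) atBot atTop :=
    hdeg ▸ tendsto_neg_one_pow_mul_eval_atBot (monic_prod_X_sub_C _ _).add_derivative (by omega)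
  obtain ⟨a, ha_pos, ha_lt⟩ := ((hlim.eventually_gt_atTop 0).and (eventually_lt_atBot (γ 0))).exists
  obtain ⟨c, hc, hc0⟩ := intermediate_value_Ioo' ha_lt.le
    (f := fun x ↦ (-1) ^ (m + 1) * g.eval x) (continuous_const.mul g.continuous).continuousOn
    ⟨neg_one_pow_mul_eval_add_derivative_neg γ hγ, ha_pos⟩
  exact ⟨c, hc.2, by simpa using hc0⟩

end SmallestRoot

theorem exists_strictMono_roots_add_derivative {m : ℕ} (γ : Fin m → ℝ) (hγ : StrictMono γ) :
    ∃ δ : Fin m → ℝ, StrictMono δ ∧ (∀ i, δ i < γ i) ∧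
      ∏ i, (X - C (γ i)) + derivative (∏ i, (X - C (γ i))) = ∏ i, (X - C (δ i)) := by
  cases m with
  | zero => exact ⟨γ, hγ, finZeroElim, by simp⟩
  | succ m =>
    obtain ⟨c₀, hc₀, hc₀_root⟩ := exists_isRoot_add_derivative_lt γ hγ
    choose c hc hc_root using fun i : Fin m ↦ exists_isRoot_add_derivative_mem_Ioo
      (hγ i.castSucc_lt_succ) (isRoot_prod_X_sub_C γ _) (isRoot_prod_X_sub_C γ _)
    have hc_mono : StrictMono c := fun i j hij ↦
      (hc i).2.trans ((hγ.monotone (Fin.succ_le_castSucc_iff.2 hij)).trans_lt (hc j).1)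
    have hδ : StrictMono (Fin.cons c₀ c : Fin (m + 1) → ℝ) := Fin.strictMono_cons.2
      ⟨fun i ↦ hc₀.trans ((hγ.monotone (Fin.zero_le _)).trans_lt (hc i).1), hc_mono⟩
    refine ⟨Fin.cons c₀ c, hδ, Fin.cases hc₀ fun i ↦ (hc i).2, ?_⟩
    refine (monic_prod_X_sub_C _ _).add_derivative.eq_prod_X_sub_C_of_isRoot _ hδ.injective
      (Fin.cases hc₀_root hc_root) ?_
    simp [natDegree_add_derivative]

theorem exists_strictMono_nonpos_bellPoly_eq_prod (n : ℕ) :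
    ∃ γ : Fin n → ℝ, StrictMono γ ∧ (∀ i, γ i ≤ 0) ∧ bellPoly n = ∏ i, (X - C (γ i)) := by
  induction n with
  | zero => exact ⟨finZeroElim, fun i ↦ i.elim0, finZeroElim, by simp [bellPoly_zero]⟩
  | succ n ih =>
    obtain ⟨γ, hγ, hγ_nonpos, hB⟩ := ih
    obtain ⟨δ, hδ, hδγ, hg⟩ := exists_strictMono_roots_add_derivative γ hγ
    have hδ_neg : ∀ i, δ i < 0 := fun i ↦ (hδγ i).trans_le (hγ_nonpos i)
    refine ⟨Fin.snoc δ 0, ?_, fun i ↦ ?_, ?_⟩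
    · rw [← Fin.insertNth_last', Fin.strictMono_insertNth_iff]
      exact ⟨hδ, fun i _ ↦ hδ_neg i, fun i hi ↦ absurd hi (Fin.castSucc_lt_last i).not_ge⟩
    · induction i using Fin.lastCases with
      | last => simp
      | cast i => simpa using (hδ_neg i).le
    · rw [bellPoly_succ, hB, hg, Fin.prod_univ_castSucc]
      simp [mul_comm]

theorem stmt_12_general (n : ℕ) :
    ∃ γ : Fin n → ℝ, StrictMono γ ∧ (∀ i, γ i ≤ 0) ∧
      bellPoly n = Polynomial.C (bellPoly n).leadingCoeff *
        ∏ i : Fin n, (Polynomial.X - Polynomial.C (γ i)) := by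
  obtain ⟨γ, hγ, hγ_nonpos, hB⟩ := exists_strictMono_nonpos_bellPoly_eq_prod n
  refine ⟨γ, hγ, hγ_nonpos, ?_⟩
  rw [hB, (monic_prod_X_sub_C _ _).leadingCoeff, C_1, one_mul]

theorem stmt_12 (n : ℕ) (hn : 1 ≤ n) :
    ∃ γ : Fin n → ℝ, StrictMono γ ∧ (∀ i, γ i ≤ 0) ∧
      bellPoly n = Polynomial.C (bellPoly n).leadingCoeff *
        ∏ i : Fin n, (Polynomial.X - Polynomial.C (γ i)) :=
  stmt_12_general n
end

section
/- Let {P_n} be a sequence of real polynomials with P_0 = 1, deg P_n = n, satisfying P_{n+1}(x) = κ_n(1−x²)P_n'(x) − 2κ_n r_n x P_n(x) with r_n > 0 and κ_n ≠ 0 for all n, and suppose the zero of P_1 lies in (−1, 1). Then for every n ≥ 1, all zeros of P_n are real, simple, lie in (−1, 1), and the zeros of P_n and P_{n+1} interlace. -/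
/-!
Multiplying by the weight `(1 - x²)^r`, which vanishes at `±1`, turns the recurrence into
`P_{n+1}(x) = κ (1 - x²)^(1 - r) · d/dx[(1 - x²)^r P_n(x)]`.
If `P_n` has simple zeros `γ₁ < ⋯ < γₙ` in `(-1, 1)`, the weighted function vanishes at the
`n + 2` points `-1 < γ₁ < ⋯ < γₙ < 1`, so Rolle's theorem gives a zero of `P_{n+1}` strictly
between any two consecutive ones. These are `n + 1 = deg P_{n+1}` distinct zeros, hence all
of them, and they interlace with the `γᵢ`. Induction from `P_0 = 1` finishes the proof.
-/

open Polynomial Set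

theorem Polynomial.eq_C_leadingCoeff_mul_prod_X_sub_C_of_eval_eq_zero {R : Type*} [CommRing R]
    [IsDomain R] {n : ℕ} {p : R[X]} (hp : p.degree = n) {δ : Fin n → R}
    (hδ : Function.Injective δ) (hroot : ∀ i, p.eval (δ i) = 0) :
    p = C p.leadingCoeff * ∏ i, (X - C (δ i)) := by
  have hp0 : p ≠ 0 := by rintro rfl; simp at hp
  have hroots : Finset.univ.val.map δ = p.roots := by
    refine Multiset.eq_of_le_of_card_le
      ((Multiset.le_iff_subset (Finset.univ.nodup.map hδ)).mpr ?_) ?_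
    · simp [Multiset.subset_iff, mem_roots hp0, hroot]
    · simpa [natDegree_eq_of_degree_eq_some hp] using p.card_roots'
  have hcard : Multiset.card p.roots = p.natDegree := by
    simp [← hroots, natDegree_eq_of_degree_eq_some hp]
  conv_lhs => rw [← C_leadingCoeff_mul_prod_multiset_X_sub_C hcard, ← hroots, Multiset.map_map]
  rfl

theorem Fin.strictMono_of_mem_Ioo_castSucc_succ_s15 {α : Type*} [Preorder α] {n : ℕ}
    {b : Fin (n + 2) → α} {δ : Fin (n + 1) → α} (h : ∀ i, δ i ∈ Ioo (b i.castSucc) (b i.succ)) :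
    StrictMono δ :=
  Fin.strictMono_iff_lt_succ.mpr fun i =>
    (h i.castSucc).2.trans <| (Fin.succ_castSucc i).symm ▸ (h i.succ).1

theorem Fin.strictMono_cons_snoc {α : Type*} [Preorder α] {n : ℕ} {γ : Fin n → α} {a c : α}
    (hγ : StrictMono γ) (hγmem : ∀ i, γ i ∈ Ioo a c) (hac : a < c) :
    StrictMono (Fin.cons a (Fin.snoc γ c) : Fin (n + 2) → α) := by
  have hsnoc : StrictMono (Fin.snoc γ c : Fin (n + 1) → α) := by
    rw [← Fin.insertNth_last', Fin.strictMono_insertNth_iff]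
    exact ⟨hγ, fun i _ => (hγmem i).2, fun i h => absurd h (by simp)⟩
  refine Fin.strictMono_cons.mpr ⟨fun j => ?_, hsnoc⟩
  induction j using Fin.lastCases <;> simp [hac, (hγmem _).1]

theorem exists_hasDerivAt_eq_zero_between {n : ℕ} {f f' : ℝ → ℝ} {b : Fin (n + 1) → ℝ}
    (hb : StrictMono b) (hf : ContinuousOn f (Icc (b 0) (b (Fin.last n))))
    (hff' : ∀ x ∈ Ioo (b 0) (b (Fin.last n)), HasDerivAt f (f' x) x)
    (hzero : ∀ i, f (b i) = 0) :
    ∃ δ : Fin n → ℝ, (∀ i, δ i ∈ Ioo (b i.castSucc) (b i.succ)) ∧ ∀ i, f' (δ i) = 0 := by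
  have hrolle : ∀ i : Fin n, ∃ c ∈ Ioo (b i.castSucc) (b i.succ), f' c = 0 := fun i => by
    have hsub : Icc (b i.castSucc) (b i.succ) ⊆ Icc (b 0) (b (Fin.last n)) :=
      Icc_subset_Icc (hb.monotone (Fin.zero_le _)) (hb.monotone (Fin.le_last _))
    exact exists_hasDerivAt_eq_zero (hb Fin.castSucc_lt_succ) (hf.mono hsub)
      (by rw [hzero, hzero]) fun x hx => hff' x <| Ioo_subset_Ioo
        (hb.monotone (Fin.zero_le _)) (hb.monotone (Fin.le_last _)) hx
  choose δ hδ using hrolle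
  exact ⟨δ, fun i => (hδ i).1, fun i => (hδ i).2⟩

theorem hasDerivAt_one_sub_sq_rpow_mul_eval (p : ℝ[X]) (r : ℝ) {x : ℝ} (hx : x ∈ Ioo (-1) 1) :
    HasDerivAt (fun x => (1 - x ^ 2) ^ r * p.eval x)
      ((1 - x ^ 2) ^ (r - 1) * ((1 - x ^ 2) * p.derivative.eval x - 2 * r * x * p.eval x)) x := by
  have hpos : 0 < 1 - x ^ 2 := by nlinarith [hx.1, hx.2]
  have hweight :
      HasDerivAt (fun x : ℝ => (1 - x ^ 2) ^ r) (-(2 * x) * r * (1 - x ^ 2) ^ (r - 1)) x := by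
    refine HasDerivAt.rpow_const ?_ (Or.inl hpos.ne')
    simpa using (hasDerivAt_pow 2 x).const_sub 1
  refine (hweight.mul (p.hasDerivAt x)).congr_deriv ?_
  rw [show (1 - x ^ 2) ^ r = (1 - x ^ 2) ^ (r - 1) * (1 - x ^ 2) by
    rw [← Real.rpow_add_one hpos.ne', sub_add_cancel]]
  ring

theorem exists_interlacing_roots_of_recurrence {n : ℕ} {p q : ℝ[X]} {κ r : ℝ} (hr : 0 < r)
    (hq : q = C κ * (1 - X ^ 2) * derivative p - C (2 * κ * r) * X * p)
    (hqdeg : q.degree = (n + 1 : ℕ)) {γ : Fin n → ℝ} (hγ : StrictMono γ)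
    (hγmem : ∀ i, γ i ∈ Ioo (-1 : ℝ) 1) (hp : p = C p.leadingCoeff * ∏ i, (X - C (γ i))) :
    ∃ δ : Fin (n + 1) → ℝ, StrictMono δ ∧ (∀ i, δ i ∈ Ioo (-1 : ℝ) 1) ∧
      q = C q.leadingCoeff * ∏ i, (X - C (δ i)) ∧
      ∀ i : Fin n, δ i.castSucc < γ i ∧ γ i < δ i.succ := by
  set b : Fin (n + 2) → ℝ := Fin.cons (-1) (Fin.snoc γ 1)
  have hb : StrictMono b := Fin.strictMono_cons_snoc hγ hγmem (by norm_num)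
  have hb0 : b 0 = -1 := rfl
  have hblast : b (Fin.last _) = 1 := by simp [b, ← Fin.succ_last]
  have hbγ (i : Fin n) : b i.castSucc.succ = γ i := by simp [b]
  have hzero (i : Fin (n + 2)) : (1 - b i ^ 2) ^ r * p.eval (b i) = 0 := by
    induction i using Fin.cases with
    | zero => simp [hb0, Real.zero_rpow hr.ne']
    | succ j =>
      induction j using Fin.lastCases with
      | last => simp [Fin.succ_last, hblast, Real.zero_rpow hr.ne']
      | cast i =>
        rw [hbγ, hp, eval_mul, eval_prod, Finset.prod_eq_zero (Finset.mem_univ i) (by simp),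
          mul_zero, mul_zero]
  obtain ⟨δ, hδ, hδroot⟩ := exists_hasDerivAt_eq_zero_between hb
    ((continuous_const.sub (continuous_pow 2)).continuousOn.rpow_const
      (fun _ _ => Or.inr hr.le) |>.mul p.continuous.continuousOn)
    (fun x hx => hasDerivAt_one_sub_sq_rpow_mul_eval p r (by rwa [hb0, hblast] at hx)) hzero
  have hδmem (i) : δ i ∈ Ioo (-1 : ℝ) 1 := by
    rw [← hb0, ← hblast]
    exact Ioo_subset_Ioo (hb.monotone (Fin.zero_le _)) (hb.monotone (Fin.le_last _)) (hδ i)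
  have hqδ (i) : q.eval (δ i) = 0 := by
    have hpos : 0 < 1 - δ i ^ 2 := by nlinarith [(hδmem i).1, (hδmem i).2]
    have := (mul_eq_zero.mp (hδroot i)).resolve_left (Real.rpow_pos_of_pos hpos _).ne'
    simp only [hq, eval_sub, eval_mul, eval_C, eval_X, eval_one, eval_pow]
    linear_combination κ * this
  have hδmono : StrictMono δ := Fin.strictMono_of_mem_Ioo_castSucc_succ_s15 hδ
  refine ⟨δ, hδmono, hδmem,
    eq_C_leadingCoeff_mul_prod_X_sub_C_of_eval_eq_zero hqdeg hδmono.injective hqδ,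
    fun i => ⟨hbγ i ▸ (hδ i.castSucc).2, ?_⟩⟩
  simpa [← Fin.succ_castSucc, hbγ] using (hδ i.succ).1

theorem stmt_15_general (P : ℕ → Polynomial ℝ) (κ r : ℕ → ℝ)
    (hr : ∀ n, 0 < r n)
    (hP0 : P 0 = 1)
    (hdeg : ∀ n, (P n).degree = n)
    (hrec : ∀ n, P (n + 1) =
      Polynomial.C (κ n) * (1 - Polynomial.X ^ 2) * derivative (P n) -
        Polynomial.C (2 * κ n * r n) * Polynomial.X * P n) :
    ∀ n : ℕ, 1 ≤ n →
      ∃ γ : Fin n → ℝ, ∃ δ : Fin (n + 1) → ℝ,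
        StrictMono γ ∧ StrictMono δ ∧
        (∀ i, γ i ∈ Ioo (-1 : ℝ) 1) ∧ (∀ i, δ i ∈ Ioo (-1 : ℝ) 1) ∧
        P n = Polynomial.C (P n).leadingCoeff *
          ∏ i : Fin n, (Polynomial.X - Polynomial.C (γ i)) ∧
        P (n + 1) = Polynomial.C (P (n + 1)).leadingCoeff *
          ∏ i : Fin (n + 1), (Polynomial.X - Polynomial.C (δ i)) ∧
        (∀ i : Fin n, δ i.castSucc < γ i ∧ γ i < δ i.succ) := by
  have hstep (n : ℕ) {γ : Fin n → ℝ} (hγ : StrictMono γ) (hγmem : ∀ i, γ i ∈ Ioo (-1 : ℝ) 1)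
      (hP : P n = C (P n).leadingCoeff * ∏ i, (X - C (γ i))) :=
    exists_interlacing_roots_of_recurrence (hr n) (hrec n) (hdeg (n + 1)) hγ hγmem hP
  have hroots (n : ℕ) : ∃ γ : Fin n → ℝ, StrictMono γ ∧ (∀ i, γ i ∈ Ioo (-1 : ℝ) 1) ∧
      P n = C (P n).leadingCoeff * ∏ i, (X - C (γ i)) := by
    induction n with
    | zero => exact ⟨Fin.elim0, fun i => i.elim0, fun i => i.elim0, by simp [hP0]⟩
    | succ n ih =>
      obtain ⟨γ, hγ, hγmem, hP⟩ := ih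
      obtain ⟨δ, hδ, hδmem, hPδ, -⟩ := hstep n hγ hγmem hP
      exact ⟨δ, hδ, hδmem, hPδ⟩
  intro n _
  obtain ⟨γ, hγ, hγmem, hP⟩ := hroots n
  obtain ⟨δ, hδ, hδmem, hPδ, hinterlace⟩ := hstep n hγ hγmem hP
  exact ⟨γ, δ, hγ, hδ, hγmem, hδmem, hP, hPδ, hinterlace⟩

theorem stmt_15 (P : ℕ → Polynomial ℝ) (κ r : ℕ → ℝ)
    (hκ : ∀ n, κ n ≠ 0) (hr : ∀ n, 0 < r n)
    (hP0 : P 0 = 1)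
    (hdeg : ∀ n, (P n).degree = n)
    (hrec : ∀ n, P (n + 1) =
      Polynomial.C (κ n) * (1 - Polynomial.X ^ 2) * derivative (P n) -
        Polynomial.C (2 * κ n * r n) * Polynomial.X * P n)
    (hP1 : ∀ x : ℝ, (P 1).IsRoot x → x ∈ Ioo (-1 : ℝ) 1) :
    ∀ n : ℕ, 1 ≤ n →
      ∃ γ : Fin n → ℝ, ∃ δ : Fin (n + 1) → ℝ,
        StrictMono γ ∧ StrictMono δ ∧
        (∀ i, γ i ∈ Ioo (-1 : ℝ) 1) ∧ (∀ i, δ i ∈ Ioo (-1 : ℝ) 1) ∧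
        P n = Polynomial.C (P n).leadingCoeff *
          ∏ i : Fin n, (Polynomial.X - Polynomial.C (γ i)) ∧
        P (n + 1) = Polynomial.C (P (n + 1)).leadingCoeff *
          ∏ i : Fin (n + 1), (Polynomial.X - Polynomial.C (δ i)) ∧
        (∀ i : Fin n, δ i.castSucc < γ i ∧ γ i < δ i.succ) :=
  stmt_15_general P κ r hr hP0 hdeg hrec
end

section
/- The Hermite polynomials H_n satisfy H_{n+1}(x) = −H_n'(x) + 2x H_n(x), and equivalently H_{n+1}(x) = −e^{x²}(d/dx)[e^{−x²} H_n(x)]; consequently for every n ≥ 1 the zeros of H_n are real and simple and the zeros of H_n and H_{n+1} strictly interlace. -/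
/-
Induction on `n`. If `H n = c ∏ (X - γ i)` with `γ 0 < ⋯ < γ (n-1)`, the recursion gives
`H (n+1) (γ i) = -H n' (γ i) = -c ∏_{j ≠ i} (γ i - γ j)`, of sign `(-1)^(n-i)`. As `H (n+1)` is
positive near `+∞` and of sign `(-1)^(n+1)` near `-∞`, the intermediate value theorem puts a zero of
`H (n+1)` in each of the `n + 1` gaps of `-∞ < γ 0 < ⋯ < γ (n-1) < +∞`; having degree `n + 1`,
it has no others.
-/

open Polynomial

/-- The physicists' Hermite polynomials: `H 0 = 1`,
`H (n+1) = 2x·H n − H n'`. -/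
noncomputable def hermitePhys : ℕ → Polynomial ℝ
  | 0 => 1
  | n + 1 => Polynomial.C 2 * Polynomial.X * hermitePhys n - derivative (hermitePhys n)

open Filter Finset

theorem StrictMono.finSnoc {α : Type*} [Preorder α] {n : ℕ} {f : Fin n → α} (hf : StrictMono f)
    {b : α} (hb : ∀ i, f i < b) : StrictMono (Fin.snoc f b : Fin (n + 1) → α) := by
  intro i j hij
  induction j using Fin.lastCases with
  | last =>
    induction i using Fin.lastCases with
    | last => exact absurd hij (lt_irrefl _)
    | cast i => simpa using hb i
  | cast j =>
    induction i using Fin.lastCases with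
    | last => exact absurd hij (not_lt.2 (Fin.le_last _))
    | cast i => simpa using hf (Fin.castSucc_lt_castSucc_iff.1 hij)

theorem exists_mem_Ioo_eq_zero_of_mul_neg {f : ℝ → ℝ} {a b : ℝ} (hab : a ≤ b)
    (hf : ContinuousOn f (Set.Icc a b)) (h : f a * f b < 0) : ∃ x ∈ Set.Ioo a b, f x = 0 := by
  rcases mul_neg_iff.1 h with ⟨ha, hb⟩ | ⟨ha, hb⟩
  · exact intermediate_value_Ioo' hab hf ⟨hb, ha⟩
  · exact intermediate_value_Ioo hab hf ⟨ha, hb⟩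

theorem mul_neg_of_neg_one_pow_mul_pos {R : Type*} [CommRing R] [LinearOrder R]
    [IsStrictOrderedRing R] {u v : R} (m : ℕ)
    (hu : 0 < (-1) ^ (m + 1) * u) (hv : 0 < (-1) ^ m * v) : u * v < 0 := by
  have hsq : ((-1 : R) ^ m) ^ 2 = 1 := by rw [← pow_mul, mul_comm, pow_mul]; norm_num
  have huv : u * v = -(((-1) ^ (m + 1) * u) * ((-1) ^ m * v)) := by
    linear_combination (-(u * v)) * hsq
  rw [huv, neg_lt_zero]
  exact mul_pos hu hv

theorem StrictMono.neg_one_pow_mul_prod_erase_sub_pos {R : Type*} [CommRing R] [LinearOrder R]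
    [IsStrictOrderedRing R] {n : ℕ} {γ : Fin n → R} (hγ : StrictMono γ) (i : Fin n) :
    0 < (-1) ^ (n - 1 - i) * ∏ j ∈ univ.erase i, (γ i - γ j) := by
  have hsign : (-1 : R) ^ (n - 1 - i) = ∏ j ∈ univ.erase i, if i < j then -1 else 1 := by
    rw [prod_ite, prod_const_one, mul_one, prod_const, ← Fin.card_Ioi]
    congr 2
    ext j
    simpa using fun h : i < j => h.ne'
  rw [hsign, ← prod_mul_distrib]
  refine prod_pos fun j hj => ?_
  split_ifs with hij
  · simpa using hγ hij
  · simpa using hγ (lt_of_le_of_ne (not_lt.1 hij) (ne_of_mem_erase hj))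

namespace Polynomial

theorem eq_C_leadingCoeff_mul_prod_X_sub_C_of_eval_eq_zero_s18 {R ι : Type*} [CommRing R] [IsDomain R]
    [Fintype ι] {p : R[X]} (hp : p ≠ 0) (hdeg : p.natDegree ≤ Fintype.card ι) {γ : ι → R}
    (hγ : Function.Injective γ) (hroot : ∀ i, p.eval (γ i) = 0) :
    p = C p.leadingCoeff * ∏ i, (X - C (γ i)) := by
  have hdvd : ∏ i, (X - C (γ i)) ∣ p := by
    have hprod : ∏ i, (X - C (γ i)) = ((univ.val.map γ).map fun a => X - C a).prod := by
      rw [Multiset.map_map]; rfl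
    rw [hprod, Multiset.prod_X_sub_C_dvd_iff_le_roots hp,
      Multiset.le_iff_subset (univ.nodup.map hγ)]
    intro x hx
    obtain ⟨i, -, rfl⟩ := Multiset.mem_map.1 hx
    exact (mem_roots hp).2 (hroot i)
  refine eq_leadingCoeff_mul_of_monic_of_dvd_of_natDegree_le
    (monic_prod_of_monic _ _ fun i _ => monic_X_sub_C (γ i)) hdvd ?_
  simpa [natDegree_prod_of_monic _ _ fun i _ => monic_X_sub_C (γ i)] using hdeg

theorem eventually_atTop_eval_pos (p : ℝ[X]) (hlc : 0 < p.leadingCoeff) :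
    ∀ᶠ x in atTop, 0 < p.eval x :=
  p.isEquivalent_atTop_lead.eventually_pos <|
    (eventually_gt_atTop 0).mono fun _ hx => mul_pos hlc (pow_pos hx _)

theorem eventually_atBot_neg_one_pow_mul_eval_pos (p : ℝ[X]) (hlc : 0 < p.leadingCoeff) :
    ∀ᶠ x in atBot, 0 < (-1) ^ p.natDegree * p.eval x := by
  have := (Asymptotics.IsEquivalent.refl (u := fun _ : ℝ => (-1 : ℝ) ^ p.natDegree)).mul
    p.isEquivalent_atBot_lead
  refine this.eventually_pos <| (eventually_lt_atBot 0).mono fun x hx => ?_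
  simp only [Pi.mul_apply]
  rw [mul_left_comm, ← mul_pow]
  exact mul_pos hlc (pow_pos (by linarith) _)

theorem exists_strictMono_roots_interlacing {n : ℕ} {p : ℝ[X]}
    (hdeg : p.natDegree = n + 1) (hlc : 0 < p.leadingCoeff) {γ : Fin n → ℝ} (hγ : StrictMono γ)
    (hsign : ∀ i : Fin n, 0 < (-1) ^ (n - i) * p.eval (γ i)) :
    ∃ δ : Fin (n + 1) → ℝ, StrictMono δ ∧ p = C p.leadingCoeff * ∏ i, (X - C (δ i)) ∧
      ∀ i : Fin n, δ i.castSucc < γ i ∧ γ i < δ i.succ := by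
  obtain ⟨b, hpb, hγb⟩ := ((p.eventually_atTop_eval_pos hlc).and
    (eventually_all.2 fun i => eventually_gt_atTop (γ i))).exists
  obtain ⟨a, hpa, hγa, hab⟩ := ((p.eventually_atBot_neg_one_pow_mul_eval_pos hlc).and
    ((eventually_all.2 fun i => eventually_lt_atBot (γ i)).and (eventually_lt_atBot b))).exists
  -- `e` is `a < γ 0 < ⋯ < γ (n-1) < b`, along which `p` alternates in sign.
  set e : Fin (n + 2) → ℝ := Fin.cons a (Fin.snoc γ b)
  have he : StrictMono e := by
    refine Fin.strictMono_cons.2 ⟨fun j => ?_, hγ.finSnoc hγb⟩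
    induction j using Fin.lastCases with
    | last => simpa using hab
    | cast i => simpa using hγa i
  have he_sign : ∀ k : Fin (n + 2), 0 < (-1) ^ (n + 1 - k) * p.eval (e k) := by
    intro k
    induction k using Fin.cases with
    | zero => simpa [e, hdeg] using hpa
    | succ k =>
      induction k using Fin.lastCases with
      | last => simpa [e] using hpb
      | cast i => simpa [e] using hsign i
  have hroot (k : Fin (n + 1)) : ∃ x ∈ Set.Ioo (e k.castSucc) (e k.succ), p.eval x = 0 := by
    refine exists_mem_Ioo_eq_zero_of_mul_neg (he (Fin.castSucc_lt_succ (i := k))).le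
      p.continuous.continuousOn (mul_neg_of_neg_one_pow_mul_pos (n - k) ?_ ?_)
    · simpa [Nat.sub_add_comm (Nat.lt_succ_iff.1 k.isLt)] using he_sign k.castSucc
    · simpa using he_sign k.succ
  choose δ hδ hδ_root using hroot
  have hinterlace (i : Fin n) : δ i.castSucc < γ i ∧ γ i < δ i.succ :=
    ⟨by simpa [e] using (hδ i.castSucc).2, by simpa [e] using (hδ i.succ).1⟩
  have hδ_mono : StrictMono δ :=
    Fin.strictMono_iff_lt_succ.2 fun i => (hinterlace i).1.trans (hinterlace i).2
  refine ⟨δ, hδ_mono, ?_, hinterlace⟩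
  exact eq_C_leadingCoeff_mul_prod_X_sub_C_of_eval_eq_zero_s18 (leadingCoeff_ne_zero.1 hlc.ne')
    (by simp [hdeg]) hδ_mono.injective hδ_root

end Polynomial

theorem hermitePhys_succ (n : ℕ) :
    hermitePhys (n + 1) = C 2 * X * hermitePhys n - derivative (hermitePhys n) :=
  rfl

theorem natDegree_hermitePhys_and_leadingCoeff (n : ℕ) :
    (hermitePhys n).natDegree = n ∧ (hermitePhys n).leadingCoeff = 2 ^ n := by
  induction n with
  | zero => simp [hermitePhys]
  | succ n ih =>
    obtain ⟨hdeg, hlc⟩ := ih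
    have hne : hermitePhys n ≠ 0 := by rw [← leadingCoeff_ne_zero, hlc]; positivity
    have hdeg_main : (C 2 * X * hermitePhys n).natDegree = n + 1 := by
      rw [mul_assoc, natDegree_C_mul two_ne_zero, natDegree_X_mul hne, hdeg]
    have hdeg_lt : (derivative (hermitePhys n)).natDegree < (C 2 * X * hermitePhys n).natDegree :=
      hdeg_main ▸ (natDegree_derivative_le _).trans_lt (by omega)
    rw [hermitePhys_succ, natDegree_sub_eq_left_of_natDegree_lt hdeg_lt,
      leadingCoeff_sub_of_degree_lt (degree_lt_degree hdeg_lt), hdeg_main]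
    refine ⟨rfl, ?_⟩
    rw [leadingCoeff_mul, leadingCoeff_mul, leadingCoeff_C, leadingCoeff_X, hlc, pow_succ]
    ring

theorem natDegree_hermitePhys (n : ℕ) : (hermitePhys n).natDegree = n :=
  (natDegree_hermitePhys_and_leadingCoeff n).1

theorem leadingCoeff_hermitePhys (n : ℕ) : (hermitePhys n).leadingCoeff = 2 ^ n :=
  (natDegree_hermitePhys_and_leadingCoeff n).2

theorem leadingCoeff_hermitePhys_pos (n : ℕ) : 0 < (hermitePhys n).leadingCoeff := by
  rw [leadingCoeff_hermitePhys]; positivity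

theorem eval_hermitePhys_succ_eq_neg_exp_mul_deriv (n : ℕ) (x : ℝ) :
    (hermitePhys (n + 1)).eval x =
      -Real.exp (x ^ 2) * deriv (fun y => Real.exp (-y ^ 2) * (hermitePhys n).eval y) x := by
  have hgauss : HasDerivAt (fun y => Real.exp (-y ^ 2)) (Real.exp (-x ^ 2) * (-(2 * x))) x := by
    simpa using ((hasDerivAt_pow 2 x).neg).exp
  rw [(hgauss.fun_mul ((hermitePhys n).hasDerivAt x)).deriv, hermitePhys_succ]
  have hexp : Real.exp (x ^ 2) * Real.exp (-x ^ 2) = 1 := by rw [← Real.exp_add]; simp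
  simp only [eval_sub, eval_mul, eval_C, eval_X]
  linear_combination (eval x (derivative (hermitePhys n)) - 2 * x * eval x (hermitePhys n)) * hexp

theorem exists_hermitePhys_succ_interlacing {n : ℕ} {γ : Fin n → ℝ} (hγ : StrictMono γ)
    (hfac : hermitePhys n = C (hermitePhys n).leadingCoeff * ∏ i, (X - C (γ i))) :
    ∃ δ : Fin (n + 1) → ℝ, StrictMono δ ∧
      hermitePhys (n + 1) = C (hermitePhys (n + 1)).leadingCoeff * ∏ i, (X - C (δ i)) ∧
      ∀ i : Fin n, δ i.castSucc < γ i ∧ γ i < δ i.succ := by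
  refine (hermitePhys (n + 1)).exists_strictMono_roots_interlacing (natDegree_hermitePhys _)
    (leadingCoeff_hermitePhys_pos _) hγ fun i => ?_
  set c := (hermitePhys n).leadingCoeff
  rw [← Lagrange.nodal_eq] at hfac
  have hval : (hermitePhys (n + 1)).eval (γ i) = -(c * ∏ j ∈ univ.erase i, (γ i - γ j)) := by
    simp [hermitePhys_succ, hfac, Lagrange.eval_nodal_at_node,
      Lagrange.eval_nodal_derivative_eval_node_eq, Lagrange.eval_nodal]
  have hexp : (-1 : ℝ) ^ (n - i) = -(-1) ^ (n - 1 - i) := by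
    rw [show n - i = n - 1 - i + 1 by omega, pow_succ, mul_neg_one]
  rw [hval, hexp, neg_mul_neg, mul_left_comm]
  exact mul_pos (leadingCoeff_hermitePhys_pos n) (hγ.neg_one_pow_mul_prod_erase_sub_pos i)

theorem exists_hermitePhys_eq_prod (n : ℕ) :
    ∃ γ : Fin n → ℝ, StrictMono γ ∧
      hermitePhys n = C (hermitePhys n).leadingCoeff * ∏ i, (X - C (γ i)) := by
  induction n with
  | zero => exact ⟨finZeroElim, fun i => i.elim0, by simp [hermitePhys]⟩
  | succ n ih =>
    obtain ⟨γ, hγ, hfac⟩ := ih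
    obtain ⟨δ, hδ, hfac', -⟩ := exists_hermitePhys_succ_interlacing hγ hfac
    exact ⟨δ, hδ, hfac'⟩

theorem stmt_18 :
    (∀ n : ℕ, hermitePhys (n + 1) =
      -derivative (hermitePhys n) + Polynomial.C 2 * Polynomial.X * hermitePhys n) ∧
    (∀ (n : ℕ) (x : ℝ), (hermitePhys (n + 1)).eval x =
      -Real.exp (x ^ 2) *
        deriv (fun y => Real.exp (-y ^ 2) * (hermitePhys n).eval y) x) ∧
    (∀ n : ℕ, 1 ≤ n →
      ∃ γ : Fin n → ℝ, ∃ δ : Fin (n + 1) → ℝ,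
        StrictMono γ ∧ StrictMono δ ∧
        hermitePhys n = Polynomial.C (hermitePhys n).leadingCoeff *
          ∏ i : Fin n, (Polynomial.X - Polynomial.C (γ i)) ∧
        hermitePhys (n + 1) = Polynomial.C (hermitePhys (n + 1)).leadingCoeff *
          ∏ i : Fin (n + 1), (Polynomial.X - Polynomial.C (δ i)) ∧
        (∀ i : Fin n, δ i.castSucc < γ i ∧ γ i < δ i.succ)) := by
  refine ⟨fun n => by rw [hermitePhys_succ]; ring, eval_hermitePhys_succ_eq_neg_exp_mul_deriv,
    fun n _ => ?_⟩
  obtain ⟨γ, hγ, hfac⟩ := exists_hermitePhys_eq_prod n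
  obtain ⟨δ, hδ, hfac', hinterlace⟩ := exists_hermitePhys_succ_interlacing hγ hfac
  exact ⟨γ, δ, hγ, hδ, hfac, hfac', hinterlace⟩
end

section
/- Let K : ℝ → ℝ be differentiable and strictly positive, and let A be a polynomial with A(α) = A(β) = 0 for real α < β and A nonzero on (α, β). Suppose P is a polynomial of degree n with n simple zeros, all in (α, β), and Q(x) = (A(x)/K(x))·(d/dx)[K(x)P(x)] is a polynomial of degree n+2. Then Q has α and β among its zeros, and at least n−1 further zeros strictly interlacing the zeros of P; in particular if additionally there is one more zero in each gap guaranteed by Rolle's theorem, all n+2 zeros of Q are real with α and β as the extreme zeros and the zeros of P and Q interlacing. -/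
open Polynomial Set

theorem strictMono_of_interlace {α : Type*} [Preorder α] {m : ℕ} {γ : Fin (m + 1) → α}
    {c : Fin m → α} (hγ : Monotone γ) (hc : ∀ i, γ i.castSucc < c i ∧ c i < γ i.succ) :
    StrictMono c := fun i j hij =>
  calc c i < γ i.succ := (hc i).2
    _ ≤ γ j.castSucc := hγ (Fin.succ_le_castSucc_iff.mpr hij)
    _ < c j := (hc j).1

theorem exists_deriv_eq_zero_interlace {f : ℝ → ℝ} (hf : Continuous f) {m : ℕ}
    {γ : Fin (m + 1) → ℝ} (hγ : StrictMono γ) (hγf : ∀ i, f (γ i) = 0) :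
    ∃ c : Fin m → ℝ, StrictMono c ∧ (∀ i, deriv f (c i) = 0) ∧
      ∀ i, γ i.castSucc < c i ∧ c i < γ i.succ := by
  have rolle (i : Fin m) : ∃ c ∈ Ioo (γ i.castSucc) (γ i.succ), deriv f c = 0 :=
    exists_deriv_eq_zero (hγ i.castSucc_lt_succ) hf.continuousOn (by rw [hγf, hγf])
  choose c hc hfc using rolle
  exact ⟨c, strictMono_of_interlace hγ.monotone hc, hfc, hc⟩

theorem stmt_19_general (m : ℕ) (α β : ℝ)
    (K : ℝ → ℝ)
    (hKdiff : Differentiable ℝ K)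
    (A : Polynomial ℝ)
    (hAα : A.eval α = 0) (hAβ : A.eval β = 0)
    (P Q : Polynomial ℝ)
    (γ : Fin (m + 1) → ℝ) (hγmono : StrictMono γ)
    (hγroot : ∀ i, P.eval (γ i) = 0)
    (hQ : ∀ x : ℝ,
      Q.eval x = (A.eval x / K x) * deriv (fun y => K y * P.eval y) x) :
    Q.eval α = 0 ∧ Q.eval β = 0 ∧
    ∃ c : Fin m → ℝ, StrictMono c ∧
      (∀ i, Q.eval (c i) = 0) ∧
      (∀ i : Fin m, γ i.castSucc < c i ∧ c i < γ i.succ) := by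
  refine ⟨by rw [hQ, hAα, zero_div, zero_mul], by rw [hQ, hAβ, zero_div, zero_mul], ?_⟩
  have hKP : Continuous fun y => K y * P.eval y := hKdiff.continuous.mul P.continuous
  have hKPγ (i : Fin (m + 1)) : K (γ i) * P.eval (γ i) = 0 := by rw [hγroot, mul_zero]
  obtain ⟨c, hc_mono, hc_crit, hc_interlace⟩ := exists_deriv_eq_zero_interlace hKP hγmono hKPγ
  exact ⟨c, hc_mono, fun i => by rw [hQ, hc_crit, mul_zero], hc_interlace⟩

theorem stmt_19 (m : ℕ) (α β : ℝ) (hab : α < β)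
    (K : ℝ → ℝ)
    (hKdiff : Differentiable ℝ K)
    (hKpos : ∀ x, 0 < K x)
    (A : Polynomial ℝ)
    (hAα : A.eval α = 0) (hAβ : A.eval β = 0)
    (hAne : ∀ x ∈ Ioo α β, A.eval x ≠ 0)
    (P Q : Polynomial ℝ)
    (hPdeg : P.degree = (m + 1 : ℕ))
    (γ : Fin (m + 1) → ℝ) (hγmono : StrictMono γ)
    (hγmem : ∀ i, γ i ∈ Ioo α β)
    (hγroot : ∀ i, P.eval (γ i) = 0)
    (hγsimple : ∀ i, (derivative P).eval (γ i) ≠ 0)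
    (hQdeg : Q.degree = (m + 3 : ℕ))
    (hQ : ∀ x : ℝ,
      Q.eval x = (A.eval x / K x) * deriv (fun y => K y * P.eval y) x) :
    Q.eval α = 0 ∧ Q.eval β = 0 ∧
    ∃ c : Fin m → ℝ, StrictMono c ∧
      (∀ i, Q.eval (c i) = 0) ∧
      (∀ i : Fin m, γ i.castSucc < c i ∧ c i < γ i.succ) :=
  stmt_19_general m α β K hKdiff A hAα hAβ P Q γ hγmono hγroot hQ
end
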